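/- Suppose G satisfies the curvature-dimension inequality CD(m,κ) and f : V → ℝ satisfies −Δf(x) = λ f(x) for all x ∈ V. Then for every vertex x ∈ V, −Δ(|∇f|²)(x) ≤ (2λ − 2κ) |∇f|²(x) − (4/m) λ² f²(x), where |∇f|² is viewed as a function on V. -/

import Mathlib

/-! For an eigenfunction `-Δf = λf`, both arguments of `Γ` in the correction terms of
`Γ₂(f,f)` are multiples of `f`, so `Γ₂(f,f) = ½ΔΓ(f,f) + λΓ(f,f)`. Since `Γ(f,f) = ½|∇f|²`,
the inequality `CD(m,κ)` at `f` is, after multiplying by 4, exactly the claimed bound. -/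

open Finset

/-- The weighted degree `d(x) = Σ_y w(x,y)`. -/
noncomputable def deg {V : Type*} [Fintype V] (w : V → V → ℝ) (x : V) : ℝ :=
  ∑ y, w x y

/-- The graph Laplacian `Δf(x) = (1/d(x)) Σ_y w(x,y) (f(y) − f(x))`. -/
noncomputable def lap {V : Type*} [Fintype V] (w : V → V → ℝ) (f : V → ℝ) (x : V) : ℝ :=
  (1 / deg w x) * ∑ y, w x y * (f y - f x)

/-- The bilinear operator `Γ(f,g)(x) = (1/2)(Δ(fg)(x) − f(x)Δg(x) − g(x)Δf(x))`. -/
noncomputable def gam {V : Type*} [Fintype V] (w : V → V → ℝ) (f g : V → ℝ) (x : V) : ℝ :=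
  (1 / 2) * (lap w (fun y => f y * g y) x - f x * lap w g x - g x * lap w f x)

/-- The curvature operator `Γ₂(f,g)(x) = (1/2)(ΔΓ(f,g)(x) − Γ(f,Δg)(x) − Γ(g,Δf)(x))`. -/
noncomputable def gam2 {V : Type*} [Fintype V] (w : V → V → ℝ) (f g : V → ℝ) (x : V) : ℝ :=
  (1 / 2) * (lap w (gam w f g) x - gam w f (lap w g) x - gam w g (lap w f) x)

/-- The gradient square `|∇f|²(x) = (1/d(x)) Σ_y w(x,y) (f(x) − f(y))²`. -/
noncomputable def gradsq {V : Type*} [Fintype V] (w : V → V → ℝ) (f : V → ℝ) (x : V) : ℝ :=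
  (1 / deg w x) * ∑ y, w x y * (f x - f y) ^ 2

/-- The curvature-dimension inequality `CD(m,κ)`. -/
def CD {V : Type*} [Fintype V] (w : V → V → ℝ) (m κ : ℝ) : Prop :=
  ∀ (f : V → ℝ) (x : V), gam2 w f f x ≥ (1 / m) * (lap w f x) ^ 2 + κ * gam w f f x

section

variable {V : Type*} [Fintype V] (w : V → V → ℝ)

lemma lap_const_mul (c : ℝ) (g : V → ℝ) (x : V) :
    lap w (fun y => c * g y) x = c * lap w g x := by
  simp only [lap, mul_sum]
  refine sum_congr rfl fun y _ => ?_
  ring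

lemma gam_const_mul_right (c : ℝ) (f g : V → ℝ) (x : V) :
    gam w f (fun y => c * g y) x = c * gam w f g x := by
  have hprod : lap w (fun y => f y * (c * g y)) x = c * lap w (fun y => f y * g y) x := by
    simpa only [mul_left_comm] using lap_const_mul w c (fun y => f y * g y) x
  simp only [gam, hprod, lap_const_mul]
  ring

lemma gam_self_eq_half_gradsq (f : V → ℝ) : gam w f f = fun x => (1 / 2) * gradsq w f x := by
  funext x
  have hsum : ∑ y, w x y * (f x - f y) ^ 2
      = ∑ y, w x y * (f y * f y - f x * f x) - 2 * f x * ∑ y, w x y * (f y - f x) := by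
    rw [mul_sum, ← sum_sub_distrib]
    refine sum_congr rfl fun y _ => ?_
    ring
  simp only [gam, gradsq, lap, hsum]
  ring

lemma gam2_self_of_lap_eq (lam : ℝ) (f : V → ℝ) (hf : lap w f = fun y => -lam * f y) (x : V) :
    gam2 w f f x = (1 / 4) * lap w (gradsq w f) x + (lam / 2) * gradsq w f x := by
  have hgrad : gradsq w f = fun y => 2 * gam w f f y := by
    rw [gam_self_eq_half_gradsq]
    funext y
    ring
  simp only [gam2, hf, gam_const_mul_right, hgrad, lap_const_mul]
  ring

end

theorem lap_gradsq_bound_general {V : Type*} [Fintype V] (w : V → V → ℝ)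
    (m κ : ℝ) (hCD : CD w m κ)
    (lam : ℝ) (f : V → ℝ) (hf : ∀ x, -lap w f x = lam * f x) (x : V) :
    -lap w (fun y => gradsq w f y) x ≤
      (2 * lam - 2 * κ) * gradsq w f x - (4 / m) * lam ^ 2 * f x ^ 2 := by
  have hlap : lap w f = fun y => -lam * f y := funext fun y => by linarith [hf y]
  have hcd := hCD f x
  rw [gam2_self_of_lap_eq w lam f hlap, gam_self_eq_half_gradsq, hlap] at hcd
  have hdiv : 4 / m * lam ^ 2 * f x ^ 2 = 4 * (1 / m * (-lam * f x) ^ 2) := by ring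
  rw [hdiv]
  linarith

theorem lap_gradsq_bound {V : Type*} [Fintype V] (w : V → V → ℝ)
    (hsymm : ∀ x y, w x y = w y x) (hnonneg : ∀ x y, 0 ≤ w x y)
    (hloop : ∀ x, w x x = 0) (hdeg : ∀ x, 0 < deg w x)
    (m κ : ℝ) (hm : 0 < m) (hCD : CD w m κ)
    (lam : ℝ) (f : V → ℝ) (hf : ∀ x, -lap w f x = lam * f x) (x : V) :
    -lap w (fun y => gradsq w f y) x ≤
      (2 * lam - 2 * κ) * gradsq w f x - (4 / m) * lam ^ 2 * f x ^ 2 :=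
  lap_gradsq_bound_general w m κ hCD lam f hf x
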